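/- arXiv:2111.02688 — 2 statements merged into one kernel-verified Lean document; each statement's English description precedes it below -/
import Mathlib

section
/- Let $U$ be an $n \times n$ stochastic matrix (nonnegative entries, each row summing to $1$). Then there exists a $2^n \times 2^n$ stochastic matrix $V$, indexed by subsets of $\{1,\dots,n\}$, such that for all $i, j \in \{1,\dots,n\}$: $U_{ij} = \sum_{A \subseteq \{1,\dots,n\},\, i \in A} V_{\{j\}, A}$. -/
open Finset

lemma key_prod_ite {ι : Type*} [DecidableEq ι] (s B : Finset ι) (hB : B ⊆ s) (p : ι → ℝ) :
    ∏ k ∈ s, (if k ∈ B then p k else 1 - p k) = (∏ k ∈ B, p k) * ∏ k ∈ s \ B, (1 - p k) := by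
  rw [Finset.prod_ite]
  congr 1
  · congr 1
    rw [Finset.filter_mem_eq_inter, Finset.inter_eq_right.mpr hB]
  · congr 1
    rw [Finset.sdiff_eq_filter]

lemma key_sum {ι : Type*} [DecidableEq ι] (s : Finset ι) (p : ι → ℝ) :
    ∑ B ∈ s.powerset, ∏ k ∈ s, (if k ∈ B then p k else 1 - p k) = 1 := by
  calc ∑ B ∈ s.powerset, ∏ k ∈ s, (if k ∈ B then p k else 1 - p k)
      = ∑ B ∈ s.powerset, (∏ k ∈ B, p k) * ∏ k ∈ s \ B, (1 - p k) := by
        refine Finset.sum_congr rfl fun B hB => ?_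
        exact key_prod_ite s B (Finset.mem_powerset.mp hB) p
    _ = ∏ k ∈ s, (p k + (1 - p k)) := (Finset.prod_add _ _ _).symm
    _ = 1 := by simp

/-- for any `n × n` stochastic matrix `U` there is a stochastic matrix `V`
indexed by subsets of `{1,…,n}` such that `U i j` equals the total `V`-mass from the
singleton `{j}` to subsets containing `i`. -/
theorem exists_powerset_stochastic_simulating_transpose
    {n : ℕ} (U : Matrix (Fin n) (Fin n) ℝ)
    (hnonneg : ∀ i j, 0 ≤ U i j)
    (hstoch : ∀ i, ∑ j, U i j = 1) :
    ∃ V : Matrix (Finset (Fin n)) (Finset (Fin n)) ℝ,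
      (∀ A B, 0 ≤ V A B) ∧
      (∀ A, ∑ B, V A B = 1) ∧
      (∀ i j, U i j = ∑ A ∈ Finset.univ.filter (fun A : Finset (Fin n) => i ∈ A),
        V {j} A) := by
  have hle : ∀ i j, U i j ≤ 1 := by
    intro i j
    calc U i j ≤ ∑ k, U i k := Finset.single_le_sum (fun k _ => hnonneg i k) (Finset.mem_univ j)
      _ = 1 := hstoch i
  set f : Fin n → Finset (Fin n) → ℝ :=
    fun j A => ∏ k, if k ∈ A then U k j else 1 - U k j with hf
  have hfnonneg : ∀ j A, 0 ≤ f j A := by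
    intro j A
    apply Finset.prod_nonneg
    intro k _
    split
    · exact hnonneg k j
    · linarith [hle k j]
  have hfsum : ∀ j, ∑ A, f j A = 1 := by
    intro j
    rw [← Finset.powerset_univ, hf]
    exact key_sum Finset.univ (fun k => U k j)
  have hfmem : ∀ i j, ∑ A ∈ Finset.univ.filter (fun A : Finset (Fin n) => i ∈ A),
      f j A = U i j := by
    intro i j
    have step1 : ∀ A ∈ Finset.univ.filter (fun A : Finset (Fin n) => i ∈ A),
        f j A = U i j * ∏ k ∈ Finset.univ.erase i,
          (if k ∈ A.erase i then U k j else 1 - U k j) := by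
      intro A hA
      have hiA : i ∈ A := (Finset.mem_filter.mp hA).2
      simp only [hf]
      rw [← Finset.mul_prod_erase Finset.univ _ (Finset.mem_univ i)]
      simp only [hiA, if_true]
      congr 1
      refine Finset.prod_congr rfl fun k hk => ?_
      have hki : k ≠ i := (Finset.mem_erase.mp hk).1
      simp [Finset.mem_erase, hki]
    rw [Finset.sum_congr rfl step1, ← Finset.mul_sum]
    have hbij : ∑ A ∈ Finset.univ.filter (fun A : Finset (Fin n) => i ∈ A),
        ∏ k ∈ Finset.univ.erase i, (if k ∈ A.erase i then U k j else 1 - U k j)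
        = ∑ B ∈ (Finset.univ.erase i).powerset,
        ∏ k ∈ Finset.univ.erase i, (if k ∈ B then U k j else 1 - U k j) := by
      refine Finset.sum_bij' (fun A _ => A.erase i) (fun B _ => insert i B) ?_ ?_ ?_ ?_ ?_
      · intro A hA
        simp only [Finset.mem_powerset]
        intro k hk
        exact Finset.mem_erase.mpr ⟨(Finset.mem_erase.mp hk).1, Finset.mem_univ k⟩
      · intro B hB
        simp
      · intro A hA
        have hiA : i ∈ A := (Finset.mem_filter.mp hA).2
        exact Finset.insert_erase hiA
      · intro B hB
        have hiB : i ∉ B := by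
          intro h
          exact absurd ((Finset.mem_powerset.mp hB) h) (by simp)
        exact Finset.erase_insert hiB
      · intro A hA
        rfl
    rw [hbij, key_sum (Finset.univ.erase i) (fun k => U k j), mul_one]
  refine ⟨fun A B => if h : A.Nonempty then f h.choose B else if B = ∅ then 1 else 0,
    ?_, ?_, ?_⟩
  · intro A B
    dsimp only
    split
    · exact hfnonneg _ _
    · split <;> norm_num
  · intro A
    by_cases h : A.Nonempty
    · simp only [dif_pos h]
      exact hfsum _
    · simp only [dif_neg h]
      simp
  · intro i j
    have hne : ({j} : Finset (Fin n)).Nonempty := ⟨j, Finset.mem_singleton_self j⟩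
    have hch : hne.choose = j := Finset.mem_singleton.mp hne.choose_spec
    have : ∀ A : Finset (Fin n),
        (if h : ({j} : Finset (Fin n)).Nonempty then f h.choose A else if A = ∅ then 1 else 0)
        = f j A := by
      intro A
      rw [dif_pos hne, hch]
    rw [Finset.sum_congr rfl (fun A _ => this A), hfmem i j]
end

section
/- Let $M$ be a one-way probabilistic finite automaton over alphabet $\Sigma$ with finite state set $Q$, $|Q| = n$, whose transitions are given by stochastic matrices $U_\sigma$ ($\sigma \in \Sigma$). Then there exists a probabilistic finite automaton $K$ with state set of size $2^n$, transition stochastic matrices $V_\sigma$, such that for all states $p, q \in Q$, there is a state $s(p)$ of $K$ and a set $T(q)$ of states of $K$ with: for every word $w \in \Sigma^*$, the probability that $M$ goes from $q$ to $p$ reading $w$ equals the probability that $K$, started in $s(p)$ and reading the reversal $w^R$, ends in a state belonging to $T(q)$. -/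
lemma key_prod_sum {n : ℕ} (a b : Fin n → ℝ) :
    ∑ B : Finset (Fin n), ∏ r, (if r ∈ B then a r else b r) = ∏ r, (a r + b r) := by
  rw [Finset.prod_add]
  rw [← Finset.powerset_univ]
  apply Finset.sum_congr rfl
  intro t ht
  rw [Finset.mem_powerset] at ht
  rw [← Finset.prod_sdiff ht]
  rw [mul_comm]
  congr 1
  · exact Finset.prod_congr rfl (fun r hr => by simp [hr])
  · exact Finset.prod_congr rfl (fun r hr => by simp [(Finset.mem_sdiff.mp hr).2])

lemma marginal {n : ℕ} (a : Fin n → ℝ) (q : Fin n) :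
    ∑ B : Finset (Fin n), (if q ∈ B then (1:ℝ) else 0) * ∏ r, (if r ∈ B then a r else 1 - a r)
      = a q := by
  have h : ∀ B : Finset (Fin n),
      (if q ∈ B then (1:ℝ) else 0) * ∏ r, (if r ∈ B then a r else 1 - a r)
      = ∏ r, (if r ∈ B then a r else (if r = q then 0 else 1 - a r)) := by
    intro B
    by_cases hq : q ∈ B
    · simp only [hq, if_true, one_mul]
      apply Finset.prod_congr rfl
      intro r _
      by_cases hr : r ∈ B
      · simp [hr]
      · have : r ≠ q := fun h => hr (h ▸ hq)
        simp [hr, this]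
    · simp only [hq, if_false, zero_mul]
      symm
      apply Finset.prod_eq_zero (Finset.mem_univ q)
      simp [hq]
  rw [Finset.sum_congr rfl (fun B _ => h B), key_prod_sum]
  have : ∀ r : Fin n, a r + (if r = q then (0:ℝ) else 1 - a r) = if r = q then a q else 1 := by
    intro r
    by_cases hr : r = q <;> simp [hr]
  rw [Finset.prod_congr rfl (fun r _ => this r)]
  simp


/-- Nasu–Honda reversal lemma: any `n`-state probabilistic finite automaton
`M` given by stochastic matrices `U σ` can be simulated on reversed inputs by a
probabilistic finite automaton `K` with `2^n` states (indexed by subsets of the state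
set): for all states `p q` there are a start state `s p` of `K` and a set `T q` of
states of `K` such that for all words `w`, the probability that `M` goes from `q` to
`p` reading `w` equals the probability that `K`, started in `s p` and reading `w`
reversed, ends in a state in `T q`. -/
theorem nasu_honda_reversal
    {n : ℕ} {Alpha : Type*}
    (U : Alpha → Matrix (Fin n) (Fin n) ℝ)
    (hUnonneg : ∀ σ i j, 0 ≤ U σ i j)
    (hUstoch : ∀ σ i, ∑ j, U σ i j = 1) :
    ∃ (V : Alpha → Matrix (Finset (Fin n)) (Finset (Fin n)) ℝ)
      (s : Fin n → Finset (Fin n))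
      (T : Fin n → Finset (Finset (Fin n))),
      (∀ σ A B, 0 ≤ V σ A B) ∧
      (∀ σ A, ∑ B, V σ A B = 1) ∧
      (∀ (p q : Fin n) (w : List Alpha),
        (w.map U).prod q p = ∑ r ∈ T q, (w.reverse.map V).prod (s p) r) := by
  classical
  set x : Alpha → Finset (Fin n) → Fin n → ℝ := fun σ A r => ∑ j ∈ A, U σ r j with hxdef
  have hx01 : ∀ σ A r, 0 ≤ x σ A r ∧ x σ A r ≤ 1 := by
    intro σ A r
    constructor
    · exact Finset.sum_nonneg fun j _ => hUnonneg σ r j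
    · rw [← hUstoch σ r]
      exact Finset.sum_le_sum_of_subset_of_nonneg (Finset.subset_univ A)
        (fun j _ _ => hUnonneg σ r j)
  set V : Alpha → Matrix (Finset (Fin n)) (Finset (Fin n)) ℝ :=
    fun σ A B => ∏ r, (if r ∈ B then x σ A r else 1 - x σ A r) with hVdef
  have hVmarg : ∀ σ A q, ∑ B : Finset (Fin n), (if q ∈ B then (1:ℝ) else 0) * V σ A B
      = x σ A q := fun σ A q => marginal (x σ A) q
  refine ⟨V, fun p => {p}, fun q => Finset.univ.filter (fun B => q ∈ B), ?_, ?_, ?_⟩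
  · intro σ A B
    apply Finset.prod_nonneg
    intro r _
    by_cases hr : r ∈ B
    · simpa [hr] using (hx01 σ A r).1
    · simpa [hr] using sub_nonneg.mpr (hx01 σ A r).2
  · intro σ A
    rw [hVdef]
    rw [key_prod_sum]
    simp
  · intro p q w
    have hfilt : ∀ (q : Fin n) (f : Finset (Fin n) → ℝ),
        ∑ r ∈ Finset.univ.filter (fun B => q ∈ B), f r
        = ∑ B : Finset (Fin n), (if q ∈ B then (1:ℝ) else 0) * f B := by
      intro q f
      rw [Finset.sum_filter]
      apply Finset.sum_congr rfl
      intro B _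
      by_cases hq : q ∈ B <;> simp [hq]
    rw [hfilt q]
    induction w generalizing q with
    | nil =>
      simp only [List.map_nil, List.prod_nil, List.reverse_nil]
      have h1 : ∀ B : Finset (Fin n),
          (if q ∈ B then (1:ℝ) else 0)
            * (1 : Matrix (Finset (Fin n)) (Finset (Fin n)) ℝ) ({p} : Finset (Fin n)) B
          = if ({p} : Finset (Fin n)) = B then (if q ∈ B then (1:ℝ) else 0) else 0 := by
        intro B
        rw [Matrix.one_apply]
        split <;> simp
      rw [Finset.sum_congr rfl (fun B _ => h1 B), Finset.sum_ite_eq]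
      simp [Matrix.one_apply, eq_comm]
    | cons σ w ih =>
      rw [List.reverse_cons, List.map_append, List.prod_append, List.map_cons, List.prod_cons,
        List.map_cons, List.prod_cons, List.map_nil, List.prod_nil, mul_one, Matrix.mul_apply]
      simp only [Matrix.mul_apply]
      set P : Matrix (Finset (Fin n)) (Finset (Fin n)) ℝ := (w.reverse.map V).prod with hP
      calc (∑ j, U σ q j * (w.map U).prod j p)
          = ∑ j, U σ q j
              * ∑ A : Finset (Fin n), (if j ∈ A then (1:ℝ) else 0) * P ({p} : Finset (Fin n)) A := by
            refine Finset.sum_congr rfl fun j _ => ?_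
            rw [ih j]
        _ = ∑ A : Finset (Fin n), P ({p} : Finset (Fin n)) A * x σ A q := by
            simp only [Finset.mul_sum]
            rw [Finset.sum_comm]
            refine Finset.sum_congr rfl fun A _ => ?_
            have hxA : x σ A q = ∑ j ∈ A, U σ q j := rfl
            calc ∑ j, U σ q j * ((if j ∈ A then (1:ℝ) else 0) * P ({p} : Finset (Fin n)) A)
                = ∑ j, (if j ∈ A then P ({p} : Finset (Fin n)) A * U σ q j else 0) := by
                  refine Finset.sum_congr rfl fun j _ => ?_
                  by_cases h : j ∈ A <;> simp [h] <;> ring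
              _ = P ({p} : Finset (Fin n)) A * x σ A q := by
                  rw [Finset.sum_ite_mem, Finset.univ_inter, ← Finset.mul_sum, hxA]
        _ = ∑ A : Finset (Fin n), P ({p} : Finset (Fin n)) A
              * ∑ B : Finset (Fin n), (if q ∈ B then (1:ℝ) else 0) * V σ A B := by
            refine Finset.sum_congr rfl fun A _ => ?_
            rw [hVmarg]
        _ = ∑ B : Finset (Fin n), (if q ∈ B then (1:ℝ) else 0)
              * ∑ A : Finset (Fin n), P ({p} : Finset (Fin n)) A * V σ A B := by
            simp only [Finset.mul_sum]
            rw [Finset.sum_comm]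
            exact Finset.sum_congr rfl fun B _ => Finset.sum_congr rfl fun A _ => by ring
end
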